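/- The set S of all GAS convergent bounded real sequences is not separable in l∞: there is an uncountable subset Λ of S with pairwise distances equal to 1 (sequences supported on perfect squares with values 0 or 1), hence every dense subset of S is uncountable. -/
import Mathlib

open Filter

open scoped Classical in
/-- The sequence of partial densities of `P ⊆ ℕ`. -/
noncomputable def densSeq (P : Set ℕ) (n : ℕ) : ℝ :=
  (((Finset.range n).filter (fun k => k ∈ P)).card : ℝ) / n

/-- `P` has natural density `d`. -/
def HasDensity (P : Set ℕ) (d : ℝ) : Prop :=
  Tendsto (densSeq P) atTop (nhds d)

/-- Statistical convergence of a real sequence to `l`. -/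
def StatTendsto (x : ℕ → ℝ) (l : ℝ) : Prop :=
  ∀ ε : ℝ, 0 < ε → HasDensity {n | |x n - l| > ε} 0

/-- The space `l∞` of bounded real sequences with sup norm. -/
noncomputable abbrev Linf := lp (fun _ : ℕ => ℝ) ⊤

/-- `F` is a Banach statistical limit functional on `l∞`. -/
def IsBSL (F : Linf →L[ℝ] ℝ) : Prop :=
  ‖F‖ = 1 ∧
  (∀ (x : Linf) (l : ℝ), StatTendsto (fun n => x n) l → F x = l) ∧
  (∀ s : Linf, HasDensity {n | ¬ 0 ≤ s n} 0 → 0 ≤ F s) ∧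
  (∀ T : Linf → Linf,
    (∀ x : Linf, HasDensity {k | T x k ≠ x (k + 1)} 0) → ∀ x : Linf, F x = F (T x))

open scoped Classical

lemma densSeq_nonneg (P : Set ℕ) (n : ℕ) : 0 ≤ densSeq P n := by
  unfold densSeq; positivity

lemma densSeq_mono {P Q : Set ℕ} (h : Q ⊆ P) (n : ℕ) : densSeq Q n ≤ densSeq P n := by
  unfold densSeq
  gcongr

lemma hasDensity_zero_mono {P Q : Set ℕ} (h : Q ⊆ P) (hP : HasDensity P 0) :
    HasDensity Q 0 :=
  squeeze_zero (densSeq_nonneg Q) (densSeq_mono h) hP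

lemma squares_density : HasDensity {k : ℕ | ∃ m, m * m = k} 0 := by
  have hsqrt : Tendsto (fun x : ℝ => Real.sqrt x) atTop atTop := by
    simp only [Real.sqrt_eq_rpow]
    exact tendsto_rpow_atTop (by norm_num)
  have hinv : Tendsto (fun n : ℕ => 2 * (Real.sqrt n)⁻¹) atTop (nhds 0) := by
    have := ((hsqrt.comp tendsto_natCast_atTop_atTop).inv_tendsto_atTop).const_mul (2:ℝ)
    simpa using this
  have hub : Tendsto (fun n : ℕ => ((Nat.sqrt n : ℝ) + 1) / n) atTop (nhds 0) := by
    apply squeeze_zero' (Eventually.of_forall fun n => by positivity)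
      _ hinv
    filter_upwards [eventually_ge_atTop 1] with n hn
    have hn0 : (0:ℝ) < n := by exact_mod_cast hn
    have hs0 : (0:ℝ) < Real.sqrt n := Real.sqrt_pos.2 hn0
    have h1 : (1:ℝ) ≤ Real.sqrt n := Real.one_le_sqrt.2 (by exact_mod_cast hn)
    have hns : (Nat.sqrt n : ℝ) ≤ Real.sqrt n := Real.nat_sqrt_le_real_sqrt
    calc ((Nat.sqrt n : ℝ) + 1) / n ≤ (Real.sqrt n + Real.sqrt n) / n := by gcongr
    _ = 2 * (Real.sqrt n)⁻¹ := by
        rw [← two_mul, mul_div_assoc, Real.sqrt_div_self', one_div]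
  apply squeeze_zero (densSeq_nonneg _) _ hub
  intro n
  rcases Nat.eq_zero_or_pos n with rfl | hn
  · simp [densSeq]
  unfold densSeq
  gcongr
  have hcard : ((Finset.range n).filter (fun k => k ∈ {k : ℕ | ∃ m, m * m = k})).card
      ≤ Nat.sqrt n + 1 := by
    have hsub : (Finset.range n).filter (fun k => k ∈ {k : ℕ | ∃ m, m * m = k})
        ⊆ (Finset.range (Nat.sqrt n + 1)).image (fun m => m * m) := by
      intro k hk
      simp only [Finset.mem_filter, Finset.mem_range, Set.mem_setOf_eq] at hk
      obtain ⟨hkn, m, hm⟩ := hk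
      apply Finset.mem_image.2
      refine ⟨m, Finset.mem_range.2 ?_, hm⟩
      have : m = Nat.sqrt k := by rw [← hm, Nat.sqrt_eq]
      rw [this]
      exact Nat.lt_succ_of_le (Nat.sqrt_le_sqrt (le_of_lt hkn))
    calc _ ≤ ((Finset.range (Nat.sqrt n + 1)).image (fun m => m * m)).card :=
          Finset.card_le_card hsub
    _ ≤ Nat.sqrt n + 1 := (Finset.card_image_le).trans (by simp)
  calc (((Finset.range n).filter (fun k => k ∈ {k : ℕ | ∃ m, m * m = k})).card : ℝ)
      ≤ ((Nat.sqrt n + 1 : ℕ) : ℝ) := by exact_mod_cast hcard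
  _ = (Nat.sqrt n : ℝ) + 1 := by push_cast; ring

/-- The candidate uncountable set. -/
noncomputable def lamSet : Set Linf :=
  {x : Linf | ∀ k, if ∃ m, m * m = k then x k = 0 ∨ x k = 1 else x k = 0}

/-- Every element of `lamSet` statistically converges to `0`. -/
lemma lam_stat {x : Linf} (hx : x ∈ lamSet) : StatTendsto (fun n => x n) 0 := by
  intro ε hε
  apply hasDensity_zero_mono _ squares_density
  intro n hn
  simp only [Set.mem_setOf_eq] at hn ⊢
  by_contra h
  have := hx n
  rw [if_neg h] at this
  rw [this, sub_zero, abs_zero] at hn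
  linarith

/-- Indicator sequence of `{m * m | m ∈ A}`. -/
noncomputable def indSeq (A : Set ℕ) : ℕ → ℝ :=
  fun k => if ∃ m ∈ A, m * m = k then 1 else 0

lemma indSeq_mem (A : Set ℕ) : Memℓp (indSeq A) ⊤ := by
  apply memℓp_infty
  refine ⟨1, ?_⟩
  rintro _ ⟨k, rfl⟩
  simp only [indSeq]
  split <;> simp

noncomputable def indLinf (A : Set ℕ) : Linf := ⟨indSeq A, indSeq_mem A⟩

lemma indLinf_mem_lam (A : Set ℕ) : indLinf A ∈ lamSet := by
  intro k
  by_cases h : ∃ m, m * m = k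
  · rw [if_pos h]
    show indSeq A k = 0 ∨ indSeq A k = 1
    unfold indSeq
    split
    · right; rfl
    · left; rfl
  · rw [if_neg h]
    show indSeq A k = 0
    apply if_neg
    rintro ⟨m, _, hm⟩
    exact h ⟨m, hm⟩

lemma indSeq_sq (A : Set ℕ) (m : ℕ) : indSeq A (m * m) = if m ∈ A then 1 else 0 := by
  unfold indSeq
  by_cases hm : m ∈ A
  · rw [if_pos hm, if_pos ⟨m, hm, rfl⟩]
  · rw [if_neg hm]
    apply if_neg
    rintro ⟨m', hm', he⟩
    exact hm (Nat.mul_self_inj.1 he ▸ hm')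

lemma indLinf_injective : Function.Injective indLinf := by
  intro A B hAB
  have h : indSeq A = indSeq B := congrArg Subtype.val hAB
  ext m
  have := congrFun h (m * m)
  rw [indSeq_sq, indSeq_sq] at this
  by_cases hA : m ∈ A <;> by_cases hB : m ∈ B
  · simp [hA, hB]
  · rw [if_pos hA, if_neg hB] at this; norm_num at this
  · rw [if_neg hA, if_pos hB] at this; norm_num at this
  · simp [hA, hB]

lemma lam_not_countable : ¬ lamSet.Countable := by
  intro hc
  haveI := hc.to_subtype
  obtain ⟨g, hg⟩ := Countable.exists_injective_nat ↥lamSet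
  refine Function.cantor_injective (fun A : Set ℕ => g ⟨indLinf A, indLinf_mem_lam A⟩) ?_
  exact hg.comp (fun A B hAB => indLinf_injective (congrArg Subtype.val hAB))

lemma lam_dist : ∀ u ∈ lamSet, ∀ v ∈ lamSet, u ≠ v → dist u v = 1 := by
  intro u hu v hv huv
  have hne : ∃ k, u k ≠ v k := by
    by_contra h
    push_neg at h
    exact huv (lp.ext (funext h))
  obtain ⟨k, hk⟩ := hne
  have hvals : ∀ i, ‖(u - v) i‖ ≤ 1 := by
    intro i
    have h1 := hu i; have h2 := hv i
    rw [lp.coeFn_sub, Pi.sub_apply]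
    by_cases h : ∃ m, m * m = i
    · rw [if_pos h] at h1 h2
      rcases h1 with h1 | h1 <;> rcases h2 with h2 | h2 <;> rw [h1, h2] <;> norm_num
    · rw [if_neg h] at h1 h2
      rw [h1, h2]
      norm_num
  have hk1 : ‖(u - v) k‖ = 1 := by
    have h1 := hu k; have h2 := hv k
    rw [lp.coeFn_sub, Pi.sub_apply]
    by_cases h : ∃ m, m * m = k
    · rw [if_pos h] at h1 h2
      rcases h1 with h1 | h1 <;> rcases h2 with h2 | h2
      · exact absurd (h1.trans h2.symm) hk
      · rw [h1, h2]; norm_num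
      · rw [h1, h2]; norm_num
      · exact absurd (h1.trans h2.symm) hk
    · rw [if_neg h] at h1 h2
      exact absurd (h1.trans h2.symm) hk
  have hle : ‖u - v‖ ≤ 1 := lp.norm_le_of_forall_le zero_le_one hvals
  have hge : (1:ℝ) ≤ ‖u - v‖ := by
    have := lp.norm_apply_le_norm (by simp : (⊤ : ENNReal) ≠ 0) (u - v) k
    rw [hk1] at this
    exact this
  rw [dist_eq_norm]
  linarith

open scoped Classical in
theorem GAS_not_separable :
    ∃ Λ : Set Linf,
      Λ = {x : Linf | ∀ k, if ∃ m, m * m = k then x k = 0 ∨ x k = 1 else x k = 0} ∧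
      (Λ ⊆ {x : Linf | ∃ l : ℝ, ∀ F : Linf →L[ℝ] ℝ, IsBSL F → F x = l}) ∧
      ¬ Λ.Countable ∧
      (∀ u ∈ Λ, ∀ v ∈ Λ, u ≠ v → dist u v = 1) ∧
      ∀ D : Set Linf,
        D ⊆ {x : Linf | ∃ l : ℝ, ∀ F : Linf →L[ℝ] ℝ, IsBSL F → F x = l} →
        {x : Linf | ∃ l : ℝ, ∀ F : Linf →L[ℝ] ℝ, IsBSL F → F x = l} ⊆ closure D →
        ¬ D.Countable := by
  have hsubS : lamSet ⊆ {x : Linf | ∃ l : ℝ, ∀ F : Linf →L[ℝ] ℝ, IsBSL F → F x = l} :=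
    fun x hx => ⟨0, fun F hF => hF.2.1 x 0 (lam_stat hx)⟩
  refine ⟨lamSet, rfl, hsubS, lam_not_countable, lam_dist, ?_⟩
  intro D _ hclos hDc
  apply lam_not_countable
  haveI := hDc.to_subtype
  have hchoice : ∀ u : lamSet, ∃ d : D, dist (u : Linf) (d : Linf) < 1/2 := by
    intro u
    have hu : (u : Linf) ∈ closure D := hclos (hsubS u.2)
    rcases Metric.mem_closure_iff.1 hu (1/2) (by norm_num) with ⟨d, hd, hdist⟩
    exact ⟨⟨d, hd⟩, hdist⟩
  choose f hf using hchoice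
  have hinj : Function.Injective f := by
    intro u v huv
    by_contra hne
    have hne' : (u : Linf) ≠ (v : Linf) := fun h => hne (Subtype.ext h)
    have h1 := hf u
    have h2 := hf v
    rw [huv] at h1
    have hd := lam_dist u u.2 v v.2 hne'
    have htri := dist_triangle (u : Linf) (f v : Linf) (v : Linf)
    rw [hd] at htri
    rw [dist_comm] at h2
    linarith
  haveI : Countable ↥lamSet := hinj.countable
  exact Set.countable_coe_iff.1 inferInstance
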